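/- arXiv:2512.12700 — 6 statements merged into one kernel-verified Lean document; each statement's English description precedes it below -/
import Mathlib

section
/- Let g : ℝ → ℝ be integrable, nonnegative, even, and strictly radially decreasing on [0,∞), and fix x > 0. For k ∈ ℤ define A_k = ∫_{(2k−1)/(4x)}^{(2k+1)/(4x)} g(ξ) cos(2πxξ) dξ. Then the sequence |A_k| is monotonically decreasing in k for k ≥ 0: |A_{k+1}| < |A_k| for all k ≥ 0. -/
/-!
Translating the `k`-th window by `k/(2x)` to `[-1/(4x), 1/(4x)]` turns `cos(2πxξ)` into
`(-1)^k cos(2πxξ)`, which is positive inside that window, so for `g ≥ 0`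
`|A_k| = ∫_{-1/(4x)}^{1/(4x)} g(ξ + k/(2x)) cos(2πxξ) dξ`.
For `k ≥ 0` and `ξ` inside the window, `ξ + k/(2x)` is closer to the origin than
`ξ + (k+1)/(2x)`, so the integrand strictly decreases from `k` to `k + 1`.
-/

open MeasureTheory Real intervalIntegral

theorem abs_lt_abs_add_of_neg_half_lt {c ξ : ℝ} (hc : 0 < c) (hξ : -(c / 2) < ξ) :
    |ξ| < |ξ + c| := by
  rw [← sq_lt_sq]
  nlinarith

theorem intervalIntegral.integral_lt_integral_of_lt_on_Ioo {f h : ℝ → ℝ} {a b : ℝ}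
    (hab : a < b) (hf : IntervalIntegrable f volume a b) (hh : IntervalIntegrable h volume a b)
    (hlt : ∀ ξ ∈ Set.Ioo a b, f ξ < h ξ) :
    ∫ ξ in a..b, f ξ < ∫ ξ in a..b, h ξ := by
  have hpos : 0 < ∫ ξ in a..b, (h ξ - f ξ) :=
    intervalIntegral_pos_of_pos_on (hh.sub hf) (fun ξ hξ => sub_pos.2 (hlt ξ hξ)) hab
  rw [integral_sub hh hf] at hpos
  linarith

section Window

variable {x : ℝ}

theorem two_pi_mul_one_div_four_mul (hx : x ≠ 0) : 2 * π * x * (1 / (4 * x)) = π / 2 := by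
  field_simp
  ring

theorem two_pi_mul_mem_Icc_of_mem_Icc (hx : 0 < x) {ξ : ℝ}
    (hξ : ξ ∈ Set.Icc (-(1 / (4 * x))) (1 / (4 * x))) :
    2 * π * x * ξ ∈ Set.Icc (-(π / 2)) (π / 2) := by
  have hπx : 0 < 2 * π * x := by positivity
  have hedge := two_pi_mul_one_div_four_mul hx.ne'
  constructor <;> nlinarith [hξ.1, hξ.2]

theorem cos_window_nonneg (hx : 0 < x) {ξ : ℝ}
    (hξ : ξ ∈ Set.Icc (-(1 / (4 * x))) (1 / (4 * x))) : 0 ≤ cos (2 * π * x * ξ) :=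
  cos_nonneg_of_mem_Icc (two_pi_mul_mem_Icc_of_mem_Icc hx hξ)

theorem cos_window_pos (hx : 0 < x) {ξ : ℝ}
    (hξ : ξ ∈ Set.Ioo (-(1 / (4 * x))) (1 / (4 * x))) : 0 < cos (2 * π * x * ξ) := by
  have hπx : 0 < 2 * π * x := by positivity
  have hedge := two_pi_mul_one_div_four_mul hx.ne'
  exact cos_pos_of_mem_Ioo ⟨by nlinarith [hξ.1], by nlinarith [hξ.2]⟩

theorem integral_window_eq_neg_one_zpow_mul (g : ℝ → ℝ) (hx : x ≠ 0) (k : ℤ) :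
    ∫ ξ in ((2 * (k : ℝ) - 1) / (4 * x))..((2 * (k : ℝ) + 1) / (4 * x)),
        g ξ * cos (2 * π * x * ξ) =
      (-1) ^ k *
        ∫ ξ in -(1 / (4 * x))..(1 / (4 * x)), g (ξ + k / (2 * x)) * cos (2 * π * x * ξ) := by
  have hlo : (2 * (k : ℝ) - 1) / (4 * x) = -(1 / (4 * x)) + k / (2 * x) := by field_simp; ring
  have hhi : (2 * (k : ℝ) + 1) / (4 * x) = 1 / (4 * x) + k / (2 * x) := by field_simp; ring
  have hphase : ∀ ξ, 2 * π * x * (ξ + k / (2 * x)) = 2 * π * x * ξ + k * π := by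
    intro ξ; field_simp
  rw [hlo, hhi, ← integral_comp_add_right, ← intervalIntegral.integral_const_mul]
  congr 1 with ξ
  rw [hphase, cos_add_int_mul_pi]
  ring

theorem abs_integral_window (g : ℝ → ℝ) (hg0 : ∀ ξ, 0 ≤ g ξ) (hx : 0 < x) (k : ℤ) :
    |∫ ξ in ((2 * (k : ℝ) - 1) / (4 * x))..((2 * (k : ℝ) + 1) / (4 * x)),
        g ξ * cos (2 * π * x * ξ)| =
      ∫ ξ in -(1 / (4 * x))..(1 / (4 * x)), g (ξ + k / (2 * x)) * cos (2 * π * x * ξ) := by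
  have hwidth : -(1 / (4 * x)) ≤ 1 / (4 * x) := by
    have : 0 < 1 / (4 * x) := by positivity
    linarith
  rw [integral_window_eq_neg_one_zpow_mul g hx.ne', abs_mul, abs_neg_one_zpow, one_mul,
    abs_of_nonneg]
  exact integral_nonneg hwidth fun ξ hξ => mul_nonneg (hg0 _) (cos_window_nonneg hx hξ)

end Window

theorem A_k_strict_decreasing_general (g : ℝ → ℝ) (hg : Integrable g) (hg0 : ∀ ξ, 0 ≤ g ξ)
    (hgdec : ∀ ξ₁ ξ₂ : ℝ, |ξ₁| < |ξ₂| → g ξ₂ < g ξ₁)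
    (x : ℝ) (hx : 0 < x)
    (A : ℤ → ℝ)
    (hA : ∀ k : ℤ, A k = ∫ ξ in ((2 * (k : ℝ) - 1) / (4 * x))..((2 * (k : ℝ) + 1) / (4 * x)),
        g ξ * Real.cos (2 * π * x * ξ)) :
    ∀ k : ℕ, |A ((k : ℤ) + 1)| < |A (k : ℤ)| := by
  intro k
  have hint : ∀ t : ℝ, IntervalIntegrable (fun ξ => g (ξ + t) * cos (2 * π * x * ξ)) volume
      (-(1 / (4 * x))) (1 / (4 * x)) := fun t =>
    (hg.comp_add_right t).intervalIntegrable.mul_continuousOn (by fun_prop)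
  rw [hA, hA, abs_integral_window g hg0 hx, abs_integral_window g hg0 hx]
  have hwidth : -(1 / (4 * x)) < 1 / (4 * x) := by
    linarith [show 0 < 1 / (4 * x) by positivity]
  refine integral_lt_integral_of_lt_on_Ioo hwidth (hint _) (hint _) fun ξ hξ =>
    mul_lt_mul_of_pos_right (hgdec _ _ ?_) (cos_window_pos hx hξ)
  have hshift : ξ + ((k : ℤ) + 1 : ℤ) / (2 * x) = ξ + k / (2 * x) + 1 / (2 * x) := by
    push_cast; ring
  have hnear : -(1 / (2 * x) / 2) < ξ + k / (2 * x) := by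
    have : 1 / (2 * x) / 2 = 1 / (4 * x) := by field_simp; ring
    have : (0 : ℝ) ≤ k / (2 * x) := by positivity
    linarith [hξ.1]
  rw [hshift]
  exact abs_lt_abs_add_of_neg_half_lt (by positivity) hnear

/-- For strictly radially decreasing g, |A_{k+1}| < |A_k| for k ≥ 0. -/
theorem A_k_strict_decreasing (g : ℝ → ℝ) (hg : Integrable g) (hg0 : ∀ ξ, 0 ≤ g ξ)
    (hgeven : ∀ ξ, g (-ξ) = g ξ)
    (hgdec : ∀ ξ₁ ξ₂ : ℝ, |ξ₁| < |ξ₂| → g ξ₂ < g ξ₁)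
    (x : ℝ) (hx : 0 < x)
    (A : ℤ → ℝ)
    (hA : ∀ k : ℤ, A k = ∫ ξ in ((2 * (k : ℝ) - 1) / (4 * x))..((2 * (k : ℝ) + 1) / (4 * x)),
        g ξ * Real.cos (2 * π * x * ξ)) :
    ∀ k : ℕ, |A ((k : ℤ) + 1)| < |A (k : ℤ)| :=
  A_k_strict_decreasing_general g hg hg0 hgdec x hx A hA
end

section
/- Let û₀ ∈ L¹(ℝ) be nonnegative, even, and radially decreasing, let Ĵ(ξ) = e^{−2π²σ²ξ²} for some σ > 0, let d > 0, and assume that for a given x > 0 one has ∫_0^{3/(4x)} û₀(ξ) cos(2πxξ) dξ > 0. Then the function u(t,x) = ∫_ℝ e^{t(d·Ĵ(ξ)−1)} û₀(ξ) cos(2πxξ) dξ satisfies, for all t ≥ 0, (A_0 + 2A_1) e^{t(d·Ĵ(1/(4x)) − 1)} ≤ u(t,x) ≤ A_0 e^{t(d−1)}, where A_0 = ∫_{−1/(4x)}^{1/(4x)} û₀(ξ)cos(2πxξ)dξ > 0 and A_1 = ∫_{1/(4x)}^{3/(4x)} û₀(ξ)cos(2πxξ)dξ. -/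
/-!
Split ℝ at `±1/(4x)`, the first zeros of `cos (2πxξ)`, and use evenness to fold the outer part
onto `ξ > 1/(4x)`. There the weight `m ξ * û₀ ξ`, with `m ξ = exp (t (d Ĵ ξ - 1))`, is
nonincreasing, so pairing each half-period of the cosine with the next one turns the tail into an
alternating series with decreasing terms (Leibniz): the tail beyond `1/(4x)` is `≤ 0` and the tail
beyond `3/(4x)` is `≥ 0`. On the remaining intervals the cosine has a fixed sign, so `m` may be
frozen at its extreme values there, `m 0 = exp (t (d - 1))` and `m (1/(4x))`.
Positivity of `A₀` comes from the hypothesis, since `A₁ ≤ 0` and the integrand of `A₀` is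
nonnegative on `[-1/(4x), 0]`.
-/

open MeasureTheory Real intervalIntegral

open Set Filter

theorem integral_eq_integral_add_comp_add_right {E : Type*} [NormedAddCommGroup E]
    [NormedSpace ℝ E] {f : ℝ → E} {b δ : ℝ} (hf : IntervalIntegrable f volume b (b + 2 * δ)) :
    ∫ ξ in b..b + 2 * δ, f ξ = ∫ ξ in b..b + δ, (f ξ + f (ξ + δ)) := by
  have hmid : b + δ ∈ uIcc b (b + 2 * δ) := by
    rcases le_total 0 δ with h | h
    · exact mem_uIcc.2 (Or.inl ⟨by linarith, by linarith⟩)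
    · exact mem_uIcc.2 (Or.inr ⟨by linarith, by linarith⟩)
  have hf₁ : IntervalIntegrable f volume b (b + δ) :=
    hf.mono_set (uIcc_subset_uIcc left_mem_uIcc hmid)
  have hf₂ : IntervalIntegrable f volume (b + δ) (b + 2 * δ) :=
    hf.mono_set (uIcc_subset_uIcc hmid right_mem_uIcc)
  have hf₂' : IntervalIntegrable (fun ξ => f (ξ + δ)) volume b (b + δ) := by
    simpa [two_mul, ← add_assoc] using hf₂.comp_add_right δ
  rw [integral_add hf₁ hf₂', integral_comp_add_right, ← integral_add_adjacent_intervals hf₁ hf₂]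
  ring_nf

theorem MeasureTheory.IntegrableOn.intervalIntegrable_of_Ioi {E : Type*} [NormedAddCommGroup E]
    {f : ℝ → E} {c u v : ℝ} (hf : IntegrableOn f (Ioi c)) (hu : c ≤ u) (hv : c ≤ v) :
    IntervalIntegrable f volume u v :=
  intervalIntegrable_iff.2 (hf.mono_set fun _ hξ => lt_of_le_of_lt (le_min hu hv) hξ.1)

theorem integral_mul_sin_period_nonneg {w : ℝ → ℝ} {k b : ℝ} (hk : 0 < k)
    (hw : IntervalIntegrable w volume b (b + 2 * (π / k)))
    (hanti : AntitoneOn w (Icc b (b + 2 * (π / k)))) :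
    0 ≤ ∫ ξ in b..b + 2 * (π / k), w ξ * sin (k * (ξ - b)) := by
  -- half a period later the sine flips sign, so the paired integrand is `sin * (w ξ - w (ξ + δ))`
  set δ := π / k
  have hkδ : k * δ = π := by simp only [δ]; field_simp
  have hδ : 0 < δ := div_pos pi_pos hk
  rw [integral_eq_integral_add_comp_add_right (hw.mul_continuousOn (by fun_prop))]
  refine integral_nonneg (by linarith) fun ξ hξ => ?_
  have hsin : 0 ≤ sin (k * (ξ - b)) :=
    sin_nonneg_of_nonneg_of_le_pi (by nlinarith [hξ.1]) (by nlinarith [hξ.2])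
  have hdec : w (ξ + δ) ≤ w ξ :=
    hanti ⟨hξ.1, by linarith [hξ.2]⟩ ⟨by linarith [hξ.1], by linarith [hξ.2]⟩ (by linarith)
  rw [show k * (ξ + δ - b) = k * (ξ - b) + π by linear_combination hkδ, sin_add_pi]
  nlinarith

theorem integral_Ioi_mul_sin_nonneg {w : ℝ → ℝ} {k c : ℝ} (hk : 0 < k)
    (hw : IntegrableOn w (Ioi c)) (hanti : AntitoneOn w (Ici c)) :
    0 ≤ ∫ ξ in Ioi c, w ξ * sin (k * (ξ - c)) := by
  set p := 2 * (π / k)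
  have hp : 0 < p := by positivity
  have hf : IntegrableOn (fun ξ => w ξ * sin (k * (ξ - c))) (Ioi c) :=
    hw.mul_bdd (c := 1) (by fun_prop) (ae_of_all _ fun ξ => abs_sin_le_one _)
  have hc : ∀ j : ℕ, c ≤ c + j * p := fun j => le_add_of_nonneg_right (by positivity)
  have hperiod : ∀ j : ℕ,
      0 ≤ ∫ ξ in c + j * p..c + (j + 1 : ℕ) * p, w ξ * sin (k * (ξ - c)) := by
    intro j
    have hend : c + (j + 1 : ℕ) * p = c + j * p + p := by push_cast; ring
    have hsin : ∀ ξ, sin (k * (ξ - c)) = sin (k * (ξ - (c + j * p))) := fun ξ => by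
      rw [← sin_add_nat_mul_two_pi (k * (ξ - (c + j * p))) j]
      congr 1
      simp only [p]
      field_simp
      ring
    simp only [hend, hsin]
    exact integral_mul_sin_period_nonneg hk
      (hw.intervalIntegrable_of_Ioi (hc j) (by linarith [hc j]))
      (hanti.mono (Icc_subset_Ici_self.trans (Ici_subset_Ici.2 (hc j))))
  have hlim := intervalIntegral_tendsto_integral_Ioi c hf
    (tendsto_atTop_add_const_left _ c (tendsto_natCast_atTop_atTop.atTop_mul_const hp))
  refine ge_of_tendsto' hlim fun n => ?_
  have hsum := sum_integral_adjacent_intervals (a := fun j : ℕ => c + j * p) (n := n)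
    (fun j _ => hf.intervalIntegrable_of_Ioi (hc j) (hc (j + 1)))
  simp only [Nat.cast_zero, zero_mul, add_zero] at hsum
  rw [← hsum]
  exact Finset.sum_nonneg fun j _ => hperiod j

theorem integral_Ioi_mul_cos_nonpos {w : ℝ → ℝ} {x : ℝ} (hx : 0 < x)
    (hw : IntegrableOn w (Ioi (1 / (4 * x)))) (hanti : AntitoneOn w (Ici (1 / (4 * x)))) :
    ∫ ξ in Ioi (1 / (4 * x)), w ξ * cos (2 * π * x * ξ) ≤ 0 := by
  have hcos : ∀ ξ, cos (2 * π * x * ξ) = -sin (2 * π * x * (ξ - 1 / (4 * x))) := fun ξ => by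
    rw [show 2 * π * x * (ξ - 1 / (4 * x)) = 2 * π * x * ξ - π / 2 by field_simp; ring,
      sin_sub_pi_div_two, neg_neg]
  have := integral_Ioi_mul_sin_nonneg (k := 2 * π * x) (by positivity) hw hanti
  simp only [hcos, mul_neg, MeasureTheory.integral_neg]
  linarith

theorem integral_Ioi_mul_cos_nonneg {w : ℝ → ℝ} {x : ℝ} (hx : 0 < x)
    (hw : IntegrableOn w (Ioi (3 / (4 * x)))) (hanti : AntitoneOn w (Ici (3 / (4 * x)))) :
    0 ≤ ∫ ξ in Ioi (3 / (4 * x)), w ξ * cos (2 * π * x * ξ) := by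
  have hcos : ∀ ξ, cos (2 * π * x * ξ) = sin (2 * π * x * (ξ - 3 / (4 * x))) := fun ξ => by
    rw [show 2 * π * x * (ξ - 3 / (4 * x)) = 2 * π * x * ξ - π / 2 - π by field_simp; ring,
      sin_sub_pi, sin_sub_pi_div_two, neg_neg]
  simpa only [hcos] using integral_Ioi_mul_sin_nonneg (k := 2 * π * x) (by positivity) hw hanti

theorem cos_two_pi_mul_nonneg {x ξ : ℝ} (hx : 0 < x) (hξ : |ξ| ≤ 1 / (4 * x)) :
    0 ≤ cos (2 * π * x * ξ) := by
  have h : |2 * π * x * ξ| ≤ π / 2 := by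
    rw [abs_mul, abs_of_pos (by positivity : 0 < 2 * π * x)]
    calc 2 * π * x * |ξ| ≤ 2 * π * x * (1 / (4 * x)) := by gcongr
      _ = π / 2 := by field_simp; ring
  exact cos_nonneg_of_neg_pi_div_two_le_of_le (abs_le.1 h).1 (abs_le.1 h).2

theorem cos_two_pi_mul_nonpos {x ξ : ℝ} (hx : 0 < x) (h₁ : 1 / (4 * x) ≤ ξ)
    (h₂ : ξ ≤ 3 / (4 * x)) : cos (2 * π * x * ξ) ≤ 0 := by
  have hk : 0 < 2 * π * x := by positivity
  apply cos_nonpos_of_pi_div_two_le_of_le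
  · calc π / 2 = 2 * π * x * (1 / (4 * x)) := by field_simp; ring
      _ ≤ 2 * π * x * ξ := by gcongr
  · calc 2 * π * x * ξ ≤ 2 * π * x * (3 / (4 * x)) := by gcongr
      _ = π + π / 2 := by field_simp; ring

def RadiallyAntitone (f : ℝ → ℝ) : Prop :=
  ∀ ξ₁ ξ₂ : ℝ, |ξ₁| ≤ |ξ₂| → f ξ₂ ≤ f ξ₁

namespace RadiallyAntitone

variable {f g : ℝ → ℝ}

theorem even (hf : RadiallyAntitone f) : Function.Even f := fun ξ =>
  le_antisymm (hf _ _ (abs_neg ξ).ge) (hf _ _ (abs_neg ξ).le)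

theorem antitoneOn (hf : RadiallyAntitone f) : AntitoneOn f (Ici 0) := fun ξ₁ h₁ ξ₂ h₂ h =>
  hf _ _ (by rwa [abs_of_nonneg h₁, abs_of_nonneg h₂])

theorem le_apply_zero (hf : RadiallyAntitone f) (ξ : ℝ) : f ξ ≤ f 0 :=
  hf _ _ (by simp)

theorem mul (hf : RadiallyAntitone f) (hg : RadiallyAntitone g) (hf₀ : ∀ ξ, 0 ≤ f ξ)
    (hg₀ : ∀ ξ, 0 ≤ g ξ) : RadiallyAntitone fun ξ => f ξ * g ξ := fun _ _ h =>
  mul_le_mul (hf _ _ h) (hg _ _ h) (hg₀ _) (hf₀ _)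

theorem integrable_mul (hf : RadiallyAntitone f) (hfc : Continuous f) (hf₀ : ∀ ξ, 0 ≤ f ξ)
    (hg : Integrable g) : Integrable fun ξ => f ξ * g ξ :=
  hg.bdd_mul hfc.aestronglyMeasurable
    (ae_of_all _ fun ξ => (norm_of_nonneg (hf₀ ξ)).trans_le (hf.le_apply_zero ξ))

end RadiallyAntitone

theorem Monotone.comp_radiallyAntitone {f h : ℝ → ℝ} (hh : Monotone h) (hf : RadiallyAntitone f) :
    RadiallyAntitone (h ∘ f) := fun _ _ hξ => hh (hf _ _ hξ)

theorem radiallyAntitone_exp_neg_mul_sq {c : ℝ} (hc : 0 ≤ c) :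
    RadiallyAntitone fun ξ => exp (-(c * ξ ^ 2)) := fun _ _ h =>
  exp_le_exp.2 (neg_le_neg (mul_le_mul_of_nonneg_left (sq_le_sq.2 h) hc))

theorem integral_eq_intervalIntegral_add_two_mul_integral_Ioi {F : ℝ → ℝ} (hF : Integrable F)
    (heven : Function.Even F) (a : ℝ) :
    ∫ ξ, F ξ = (∫ ξ in -a..a, F ξ) + 2 * ∫ ξ in Ioi a, F ξ := by
  rw [← integral_Iic_add_Ioi (b := -a) hF.integrableOn hF.integrableOn,
    ← integral_interval_add_Ioi (a := -a) (b := a) hF.integrableOn hF.integrableOn,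
    ← integral_comp_neg_Ioi]
  have heven' : ∀ ξ, F (-ξ) = F ξ := heven
  simp only [heven']
  ring

section CosineTransform

variable {φ m : ℝ → ℝ} {x : ℝ}

theorem MeasureTheory.Integrable.mul_cos (hφ : Integrable φ) (k : ℝ) :
    Integrable fun ξ => φ ξ * cos (k * ξ) :=
  hφ.mul_bdd (c := 1) (by fun_prop) (ae_of_all _ fun ξ => abs_cos_le_one _)

theorem intervalIntegral_mul_cos_pos (hx : 0 < x) (hφ : Integrable φ) (hφ₀ : ∀ ξ, 0 ≤ φ ξ)
    (h : 0 < ∫ ξ in (0 : ℝ)..(3 / (4 * x)), φ ξ * cos (2 * π * x * ξ)) :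
    0 < ∫ ξ in (-1 / (4 * x))..(1 / (4 * x)), φ ξ * cos (2 * π * x * ξ) := by
  have hψ : ∀ u v, IntervalIntegrable (fun ξ => φ ξ * cos (2 * π * x * ξ)) volume u v :=
    fun _ _ => (hφ.mul_cos _).intervalIntegrable
  have ha : 0 < 1 / (4 * x) := by positivity
  have hleft : 0 ≤ ∫ ξ in (-1 / (4 * x))..0, φ ξ * cos (2 * π * x * ξ) :=
    integral_nonneg (by rw [neg_div]; linarith) fun ξ hξ => mul_nonneg (hφ₀ ξ)
      (cos_two_pi_mul_nonneg hx (abs_le.2 ⟨by rw [← neg_div]; linarith [hξ.1], by linarith [hξ.2]⟩))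
  have hright : 0 ≤ ∫ ξ in (1 / (4 * x))..(3 / (4 * x)), -(φ ξ * cos (2 * π * x * ξ)) :=
    integral_nonneg (by gcongr; norm_num) fun ξ hξ =>
      neg_nonneg.2 (mul_nonpos_of_nonneg_of_nonpos (hφ₀ ξ) (cos_two_pi_mul_nonpos hx hξ.1 hξ.2))
  rw [intervalIntegral.integral_neg] at hright
  rw [← integral_add_adjacent_intervals (hψ _ 0) (hψ 0 _)]
  rw [← integral_add_adjacent_intervals (hψ _ (1 / (4 * x))) (hψ _ _)] at h
  linarith

theorem integral_mul_mul_cos_le (hx : 0 < x) (hφ : Integrable φ) (hφ₀ : ∀ ξ, 0 ≤ φ ξ)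
    (hφr : RadiallyAntitone φ) (hm : Continuous m) (hm₀ : ∀ ξ, 0 ≤ m ξ)
    (hmr : RadiallyAntitone m) :
    ∫ ξ, m ξ * (φ ξ * cos (2 * π * x * ξ)) ≤
      (∫ ξ in (-1 / (4 * x))..(1 / (4 * x)), φ ξ * cos (2 * π * x * ξ)) * m 0 := by
  set a := 1 / (4 * x)
  have ha : 0 < a := by positivity
  rw [show -1 / (4 * x) = -a from neg_div _ _]
  have hψ := hφ.mul_cos (2 * π * x)
  have hF := hmr.integrable_mul hm hm₀ hψ
  have hFeven : Function.Even fun ξ => m ξ * (φ ξ * cos (2 * π * x * ξ)) := fun ξ => by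
    simp only [mul_neg, cos_neg, hmr.even ξ, hφr.even ξ]
  have htail : ∫ ξ in Ioi a, m ξ * (φ ξ * cos (2 * π * x * ξ)) ≤ 0 := by
    simpa only [mul_assoc] using integral_Ioi_mul_cos_nonpos hx
      (hmr.integrable_mul hm hm₀ hφ).integrableOn
      ((hmr.mul hφr hm₀ hφ₀).antitoneOn.mono (Ici_subset_Ici.2 ha.le))
  have hcentral : ∫ ξ in -a..a, m ξ * (φ ξ * cos (2 * π * x * ξ)) ≤
      ∫ ξ in -a..a, φ ξ * cos (2 * π * x * ξ) * m 0 := by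
    refine integral_mono_on (by linarith) hF.intervalIntegrable
      (hψ.mul_const _).intervalIntegrable fun ξ hξ => ?_
    rw [mul_comm]
    refine mul_le_mul_of_nonneg_left (hmr.le_apply_zero ξ) (mul_nonneg (hφ₀ ξ) ?_)
    exact cos_two_pi_mul_nonneg hx (abs_le.2 hξ)
  rw [integral_eq_intervalIntegral_add_two_mul_integral_Ioi hF hFeven a,
    ← intervalIntegral.integral_mul_const]
  linarith

theorem le_integral_mul_mul_cos (hx : 0 < x) (hφ : Integrable φ) (hφ₀ : ∀ ξ, 0 ≤ φ ξ)
    (hφr : RadiallyAntitone φ) (hm : Continuous m) (hm₀ : ∀ ξ, 0 ≤ m ξ)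
    (hmr : RadiallyAntitone m) :
    ((∫ ξ in (-1 / (4 * x))..(1 / (4 * x)), φ ξ * cos (2 * π * x * ξ)) +
        2 * ∫ ξ in (1 / (4 * x))..(3 / (4 * x)), φ ξ * cos (2 * π * x * ξ)) * m (1 / (4 * x)) ≤
      ∫ ξ, m ξ * (φ ξ * cos (2 * π * x * ξ)) := by
  have h3a : 1 / (4 * x) ≤ 3 / (4 * x) := by gcongr; norm_num
  set a := 1 / (4 * x)
  have ha : 0 < a := by positivity
  rw [show -1 / (4 * x) = -a from neg_div _ _]
  have hψ := hφ.mul_cos (2 * π * x)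
  have hF := hmr.integrable_mul hm hm₀ hψ
  have hFeven : Function.Even fun ξ => m ξ * (φ ξ * cos (2 * π * x * ξ)) := fun ξ => by
    simp only [mul_neg, cos_neg, hmr.even ξ, hφr.even ξ]
  have htail : 0 ≤ ∫ ξ in Ioi (3 / (4 * x)), m ξ * (φ ξ * cos (2 * π * x * ξ)) := by
    simpa only [mul_assoc] using integral_Ioi_mul_cos_nonneg hx
      (hmr.integrable_mul hm hm₀ hφ).integrableOn
      ((hmr.mul hφr hm₀ hφ₀).antitoneOn.mono (Ici_subset_Ici.2 (by positivity)))
  have hcentral : ∫ ξ in -a..a, φ ξ * cos (2 * π * x * ξ) * m a ≤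
      ∫ ξ in -a..a, m ξ * (φ ξ * cos (2 * π * x * ξ)) := by
    refine integral_mono_on (by linarith) (hψ.mul_const _).intervalIntegrable
      hF.intervalIntegrable fun ξ hξ => ?_
    rw [mul_comm]
    refine mul_le_mul_of_nonneg_right (hmr _ _ ?_) (mul_nonneg (hφ₀ ξ) ?_)
    · rw [abs_of_pos ha]; exact abs_le.2 hξ
    · exact cos_two_pi_mul_nonneg hx (abs_le.2 hξ)
  have hnext : ∫ ξ in a..3 / (4 * x), φ ξ * cos (2 * π * x * ξ) * m a ≤
      ∫ ξ in a..3 / (4 * x), m ξ * (φ ξ * cos (2 * π * x * ξ)) := by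
    refine integral_mono_on h3a (hψ.mul_const _).intervalIntegrable
      hF.intervalIntegrable fun ξ hξ => ?_
    rw [mul_comm]
    refine mul_le_mul_of_nonpos_right (hmr _ _ ?_)
      (mul_nonpos_of_nonneg_of_nonpos (hφ₀ ξ) (cos_two_pi_mul_nonpos hx hξ.1 hξ.2))
    rw [abs_of_pos ha, abs_of_pos (by linarith [hξ.1])]
    exact hξ.1
  rw [integral_eq_intervalIntegral_add_two_mul_integral_Ioi hF hFeven a,
    ← integral_interval_add_Ioi (b := 3 / (4 * x)) hF.integrableOn hF.integrableOn]
  rw [intervalIntegral.integral_mul_const] at hcentral hnext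
  linarith

end CosineTransform

theorem two_sided_bound_general (u₀hat : ℝ → ℝ) (hu : Integrable u₀hat) (hu0 : ∀ ξ, 0 ≤ u₀hat ξ)
    (hudec : ∀ ξ₁ ξ₂ : ℝ, |ξ₁| ≤ |ξ₂| → u₀hat ξ₂ ≤ u₀hat ξ₁)
    (σ d : ℝ) (hd : 0 < d)
    (Jhat : ℝ → ℝ) (hJ : ∀ ξ, Jhat ξ = Real.exp (-(2 * π ^ 2 * σ ^ 2 * ξ ^ 2)))
    (x : ℝ) (hx : 0 < x)
    (hH2 : 0 < ∫ ξ in (0 : ℝ)..(3 / (4 * x)), u₀hat ξ * Real.cos (2 * π * x * ξ))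
    (u : ℝ → ℝ → ℝ)
    (hu' : ∀ t y, u t y = ∫ ξ : ℝ, Real.exp (t * (d * Jhat ξ - 1)) * (u₀hat ξ * Real.cos (2 * π * y * ξ)))
    (A₀ A₁ : ℝ)
    (hA₀ : A₀ = ∫ ξ in (-1 / (4 * x))..(1 / (4 * x)), u₀hat ξ * Real.cos (2 * π * x * ξ))
    (hA₁ : A₁ = ∫ ξ in (1 / (4 * x))..(3 / (4 * x)), u₀hat ξ * Real.cos (2 * π * x * ξ)) :
    0 < A₀ ∧
    ∀ t : ℝ, 0 ≤ t →
      (A₀ + 2 * A₁) * Real.exp (t * (d * Jhat (1 / (4 * x)) - 1)) ≤ u t x ∧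
      u t x ≤ A₀ * Real.exp (t * (d - 1)) := by
  have hJ' : Jhat = fun ξ => exp (-(2 * π ^ 2 * σ ^ 2 * ξ ^ 2)) := funext hJ
  have hJc : Continuous Jhat := by rw [hJ']; fun_prop
  have hJr : RadiallyAntitone Jhat := hJ' ▸ radiallyAntitone_exp_neg_mul_sq (by positivity)
  refine ⟨hA₀ ▸ intervalIntegral_mul_cos_pos hx hu hu0 hH2, fun t ht => ?_⟩
  have hEr : RadiallyAntitone fun ξ => exp (t * (d * Jhat ξ - 1)) :=
    Monotone.comp_radiallyAntitone (h := fun s => exp (t * (d * s - 1)))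
      (fun _ _ h => exp_le_exp.2 (mul_le_mul_of_nonneg_left (by nlinarith) ht)) hJr
  have hEnonneg : ∀ ξ, 0 ≤ exp (t * (d * Jhat ξ - 1)) := fun _ => (exp_pos _).le
  have hEzero : exp (t * (d - 1)) = exp (t * (d * Jhat 0 - 1)) := by simp [hJ]
  rw [hu' t x, hA₀, hA₁, hEzero]
  exact ⟨le_integral_mul_mul_cos hx hu hu0 hudec (by fun_prop) hEnonneg hEr,
    integral_mul_mul_cos_le hx hu hu0 hudec (by fun_prop) hEnonneg hEr⟩

/-- Two-sided bound for u(t,x) under the positivity condition (H2) at a point x. -/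
theorem two_sided_bound (u₀hat : ℝ → ℝ) (hu : Integrable u₀hat) (hu0 : ∀ ξ, 0 ≤ u₀hat ξ)
    (hueven : ∀ ξ, u₀hat (-ξ) = u₀hat ξ)
    (hudec : ∀ ξ₁ ξ₂ : ℝ, |ξ₁| ≤ |ξ₂| → u₀hat ξ₂ ≤ u₀hat ξ₁)
    (σ d : ℝ) (hσ : 0 < σ) (hd : 0 < d)
    (Jhat : ℝ → ℝ) (hJ : ∀ ξ, Jhat ξ = Real.exp (-(2 * π ^ 2 * σ ^ 2 * ξ ^ 2)))
    (x : ℝ) (hx : 0 < x)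
    (hH2 : 0 < ∫ ξ in (0 : ℝ)..(3 / (4 * x)), u₀hat ξ * Real.cos (2 * π * x * ξ))
    (u : ℝ → ℝ → ℝ)
    (hu' : ∀ t y, u t y = ∫ ξ : ℝ, Real.exp (t * (d * Jhat ξ - 1)) * (u₀hat ξ * Real.cos (2 * π * y * ξ)))
    (A₀ A₁ : ℝ)
    (hA₀ : A₀ = ∫ ξ in (-1 / (4 * x))..(1 / (4 * x)), u₀hat ξ * Real.cos (2 * π * x * ξ))
    (hA₁ : A₁ = ∫ ξ in (1 / (4 * x))..(3 / (4 * x)), u₀hat ξ * Real.cos (2 * π * x * ξ)) :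
    0 < A₀ ∧
    ∀ t : ℝ, 0 ≤ t →
      (A₀ + 2 * A₁) * Real.exp (t * (d * Jhat (1 / (4 * x)) - 1)) ≤ u t x ∧
      u t x ≤ A₀ * Real.exp (t * (d - 1)) :=
  two_sided_bound_general u₀hat hu hu0 hudec σ d hd Jhat hJ x hx hH2 u hu' A₀ A₁ hA₀ hA₁
end

section
/- Let û₀ ∈ L¹(ℝ) be nonnegative, even, and radially decreasing, let Ĵ(ξ) = e^{−2π²σ²ξ²}, d > 0, and let x₀ > 0 satisfy ∫_{−1/(8x₀)}^{1/(8x₀)} û₀(ξ)dξ ≥ (3/4)‖û₀‖_{L¹}. Then for all 0 ≤ x < x₀ and all t ≥ 0, u(t,x) = ∫_ℝ e^{t(d·Ĵ(ξ)−1)} û₀(ξ) cos(2πxξ) dξ ≥ ((3√2 − 2)/8) ‖û₀‖_{L¹(ℝ)} e^{t(d·Ĵ(1/(8x₀)) − 1)}. -/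
/-!
On the window `|ξ| ≤ 1/(8x₀)` the phase `2πxξ` stays within `π/4`, so `cos(2πxξ) ≥ √2/2`, and
the multiplier `e^{t(dĴ(ξ)-1)}`, which decreases in `|ξ|`, is at least its value `C` at the edge of
the window. Off the window the integrand is at least `-C û₀`. With at least `3/4` of the mass of
`û₀` inside the window this gives `u ≥ C (√2/2 · 3/4 - 1/4) ‖û₀‖₁ = C (3√2 - 2)/8 ‖û₀‖₁`.
-/

open MeasureTheory Real intervalIntegral

theorem mul_setIntegral_add_mul_setIntegral_compl_le {α : Type*} [MeasurableSpace α]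
    {μ : Measure α} {s : Set α} {u w : α → ℝ} {a b : ℝ} (hs : MeasurableSet s)
    (hu : Integrable u μ) (hu0 : ∀ ξ, 0 ≤ u ξ) (hwu : Integrable (fun ξ => w ξ * u ξ) μ)
    (hin : ∀ ξ ∈ s, a ≤ w ξ) (hout : ∀ ξ ∉ s, b ≤ w ξ) :
    a * ∫ ξ in s, u ξ ∂μ + b * ∫ ξ in sᶜ, u ξ ∂μ ≤ ∫ ξ, w ξ * u ξ ∂μ := by
  rw [← integral_add_compl hs hwu, ← MeasureTheory.integral_const_mul,
    ← MeasureTheory.integral_const_mul]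
  gcongr ?_ + ?_
  · exact setIntegral_mono_on (hu.const_mul a).integrableOn hwu.integrableOn hs
      fun ξ hξ => mul_le_mul_of_nonneg_right (hin ξ hξ) (hu0 ξ)
  · exact setIntegral_mono_on (hu.const_mul b).integrableOn hwu.integrableOn hs.compl
      fun ξ hξ => mul_le_mul_of_nonneg_right (hout ξ hξ) (hu0 ξ)

theorem le_abs_of_notMem_Ioc_neg {a ξ : ℝ} (ha : 0 ≤ a) (h : ξ ∉ Set.Ioc (-a) a) :
    |a| ≤ |ξ| := by
  rw [abs_of_nonneg ha, le_abs']
  simp only [Set.mem_Ioc, not_and_or, not_lt, not_le] at h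
  exact h.imp id le_of_lt

theorem sqrt_two_div_two_le_cos {θ : ℝ} (h : |θ| ≤ π / 4) : √2 / 2 ≤ cos θ := by
  rw [← cos_abs, ← cos_pi_div_four]
  exact cos_le_cos_of_nonneg_of_le_pi (abs_nonneg θ) (by linarith [pi_pos]) h

theorem abs_two_pi_mul_mul_le {x x₀ ξ : ℝ} (hx₀ : 0 < x₀) (hx : |x| ≤ x₀)
    (hξ : |ξ| ≤ 1 / (8 * x₀)) : |2 * π * x * ξ| ≤ π / 4 :=
  calc |2 * π * x * ξ| = 2 * π * (|x| * |ξ|) := by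
        rw [abs_mul, abs_mul, abs_of_pos two_pi_pos]; ring
    _ ≤ 2 * π * (x₀ * (1 / (8 * x₀))) := by gcongr
    _ = π / 4 := by field_simp; ring

theorem three_sqrt_two_sub_two_div_eight_mul_le {M I C : ℝ} (hC : 0 ≤ C) (hI : 3 / 4 * M ≤ I) :
    (3 * √2 - 2) / 8 * M * C ≤ C * (√2 / 2) * I + -C * (M - I) := by
  nlinarith [mul_nonneg hC (mul_nonneg (by positivity : (0 : ℝ) ≤ √2 / 2 + 1) (sub_nonneg.2 hI))]

section Multiplier

variable {t d c : ℝ} (ht : 0 ≤ t) (hd : 0 ≤ d) (hc : 0 ≤ c)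
include ht hd hc

theorem exp_mul_mul_exp_neg_mul_sq_sub_one_le {ξ₁ ξ₂ : ℝ} (h : |ξ₁| ≤ |ξ₂|) :
    exp (t * (d * exp (-(c * ξ₂ ^ 2)) - 1)) ≤ exp (t * (d * exp (-(c * ξ₁ ^ 2)) - 1)) := by
  gcongr exp (t * (d * exp (-(c * ?_)) - 1))
  exact sq_le_sq.2 h

theorem integrable_exp_mul_cos_mul {u : ℝ → ℝ} (hu : Integrable u) (x : ℝ) :
    Integrable fun ξ => exp (t * (d * exp (-(c * ξ ^ 2)) - 1)) * cos (2 * π * x * ξ) * u ξ :=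
  hu.bdd_mul (c := exp (t * (d * exp (-(c * 0 ^ 2)) - 1))) (by fun_prop) <| ae_of_all _ fun ξ => by
    rw [norm_mul, norm_of_nonneg (exp_pos _).le]
    exact (mul_le_of_le_one_right (exp_pos _).le (abs_cos_le_one _)).trans
      (exp_mul_mul_exp_neg_mul_sq_sub_one_le ht hd hc (by simp))

theorem exp_mul_sqrt_two_div_two_le_exp_mul_cos {x x₀ ξ : ℝ} (hx₀ : 0 < x₀) (hx : |x| ≤ x₀)
    (hξ : |ξ| ≤ 1 / (8 * x₀)) :
    exp (t * (d * exp (-(c * (1 / (8 * x₀)) ^ 2)) - 1)) * (√2 / 2)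
      ≤ exp (t * (d * exp (-(c * ξ ^ 2)) - 1)) * cos (2 * π * x * ξ) :=
  mul_le_mul
    (exp_mul_mul_exp_neg_mul_sq_sub_one_le ht hd hc
      (by rwa [abs_of_pos (by positivity : (0 : ℝ) < 1 / (8 * x₀))]))
    (sqrt_two_div_two_le_cos (abs_two_pi_mul_mul_le hx₀ hx hξ)) (by positivity) (exp_pos _).le

theorem neg_exp_le_exp_mul_cos {a ξ : ℝ} (h : |a| ≤ |ξ|) (θ : ℝ) :
    -exp (t * (d * exp (-(c * a ^ 2)) - 1)) ≤ exp (t * (d * exp (-(c * ξ ^ 2)) - 1)) * cos θ :=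
  calc -exp (t * (d * exp (-(c * a ^ 2)) - 1))
      ≤ -exp (t * (d * exp (-(c * ξ ^ 2)) - 1)) :=
        neg_le_neg (exp_mul_mul_exp_neg_mul_sq_sub_one_le ht hd hc h)
    _ ≤ exp (t * (d * exp (-(c * ξ ^ 2)) - 1)) * cos θ := by
        nlinarith [neg_one_le_cos θ, exp_pos (t * (d * exp (-(c * ξ ^ 2)) - 1))]

end Multiplier

theorem lower_bound_near_origin_general (u₀hat : ℝ → ℝ) (hu : Integrable u₀hat)
    (hu0 : ∀ ξ, 0 ≤ u₀hat ξ)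
    (σ d : ℝ) (hd : 0 < d)
    (Jhat : ℝ → ℝ) (hJ : ∀ ξ, Jhat ξ = Real.exp (-(2 * π ^ 2 * σ ^ 2 * ξ ^ 2)))
    (x₀ : ℝ) (hx₀ : 0 < x₀)
    (hmass : (3 / 4) * (∫ ξ : ℝ, |u₀hat ξ|)
      ≤ ∫ ξ in (-1 / (8 * x₀))..(1 / (8 * x₀)), u₀hat ξ)
    (u : ℝ → ℝ → ℝ)
    (hu' : ∀ t y, u t y = ∫ ξ : ℝ, Real.exp (t * (d * Jhat ξ - 1)) * (u₀hat ξ * Real.cos (2 * π * y * ξ))) :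
    ∀ x t : ℝ, 0 ≤ x → x < x₀ → 0 ≤ t →
      ((3 * Real.sqrt 2 - 2) / 8) * (∫ ξ : ℝ, |u₀hat ξ|)
          * Real.exp (t * (d * Jhat (1 / (8 * x₀)) - 1)) ≤ u t x := by
  intro x t hx hxx₀ ht
  have habs (ξ : ℝ) : |u₀hat ξ| = u₀hat ξ := abs_of_nonneg (hu0 ξ)
  have ha : 0 < 1 / (8 * x₀) := by positivity
  have hc : 0 ≤ 2 * π ^ 2 * σ ^ 2 := by positivity
  simp only [hJ, habs] at hu' hmass ⊢
  rw [neg_div, integral_of_le (by linarith)] at hmass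
  have key := mul_setIntegral_add_mul_setIntegral_compl_le measurableSet_Ioc hu hu0
    (integrable_exp_mul_cos_mul ht hd.le hc hu x)
    (fun ξ hξ => exp_mul_sqrt_two_div_two_le_exp_mul_cos ht hd.le hc hx₀
      (by rw [abs_of_nonneg hx]; exact hxx₀.le) (abs_le.2 ⟨hξ.1.le, hξ.2⟩))
    (fun ξ hξ => neg_exp_le_exp_mul_cos ht hd.le hc (le_abs_of_notMem_Ioc_neg ha.le hξ) _)
  rw [setIntegral_compl measurableSet_Ioc hu] at key
  calc _ ≤ _ := three_sqrt_two_sub_two_div_eight_mul_le (exp_pos _).le hmass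
    _ ≤ _ := key
    _ = u t x := by rw [hu']; exact MeasureTheory.integral_congr_ae (ae_of_all _ fun ξ => by ring)

/-- Lower bound for u(t,x) for 0 ≤ x < x₀ when the mass of û₀ concentrates near 0. -/
theorem lower_bound_near_origin (u₀hat : ℝ → ℝ) (hu : Integrable u₀hat)
    (hu0 : ∀ ξ, 0 ≤ u₀hat ξ) (hueven : ∀ ξ, u₀hat (-ξ) = u₀hat ξ)
    (hudec : ∀ ξ₁ ξ₂ : ℝ, |ξ₁| ≤ |ξ₂| → u₀hat ξ₂ ≤ u₀hat ξ₁)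
    (σ d : ℝ) (hσ : 0 < σ) (hd : 0 < d)
    (Jhat : ℝ → ℝ) (hJ : ∀ ξ, Jhat ξ = Real.exp (-(2 * π ^ 2 * σ ^ 2 * ξ ^ 2)))
    (x₀ : ℝ) (hx₀ : 0 < x₀)
    (hmass : (3 / 4) * (∫ ξ : ℝ, |u₀hat ξ|)
      ≤ ∫ ξ in (-1 / (8 * x₀))..(1 / (8 * x₀)), u₀hat ξ)
    (u : ℝ → ℝ → ℝ)
    (hu' : ∀ t y, u t y = ∫ ξ : ℝ, Real.exp (t * (d * Jhat ξ - 1)) * (u₀hat ξ * Real.cos (2 * π * y * ξ))) :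
    ∀ x t : ℝ, 0 ≤ x → x < x₀ → 0 ≤ t →
      ((3 * Real.sqrt 2 - 2) / 8) * (∫ ξ : ℝ, |u₀hat ξ|)
          * Real.exp (t * (d * Jhat (1 / (8 * x₀)) - 1)) ≤ u t x :=
  lower_bound_near_origin_general u₀hat hu hu0 σ d hd Jhat hJ x₀ hx₀ hmass u hu'
end

section
/- For every x > 0, ∫_0^{3/(4x)} e^{−ξ} cos(2πxξ)/√ξ dξ > e^{−1/(4x)} · FresnelC(√3)/√x > 0; in particular the function û₀(ξ) = e^{−|ξ|}/√|ξ| satisfies ∫_0^{3/(4x)} û₀(ξ) cos(2πxξ) dξ > 0 for all x > 0. -/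
/-!
After the substitution `ξ = t² / (4x)` the integral becomes
`(1/√x) ∫₀^√3 e^{-t²/(4x)} cos(πt²/2) dt`. On `[0, √3]` the factors `e^{-t²/(4x)} - e^{-1/(4x)}`
and `cos(πt²/2)` change sign together at `t = 1`, so freezing the weight at its value at `t = 1`
decreases the integral (strictly, near `t = 0`), which gives `e^{-1/(4x)} FresnelC(√3) / √x`.
Positivity of `FresnelC(√3)` follows from `cos u ≥ 1 - u²/2` on `[0, 1]` and
`cos(πt²/2) ≥ t cos(πt²/2)` on `[1, √3]`, whence `FresnelC(√3) ≥ 1 - π²/40 - 2/π > 0`.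
-/

open Real intervalIntegral

noncomputable def FresnelC (y : ℝ) : ℝ := ∫ t in (0 : ℝ)..y, Real.cos (π * t ^ 2 / 2)

open Set MeasureTheory

theorem cos_pi_mul_div_two_nonneg {u : ℝ} (hu : u ∈ Icc (-1) 1) : 0 ≤ cos (π * u / 2) :=
  cos_nonneg_of_mem_Icc ⟨by nlinarith [pi_pos, hu.1], by nlinarith [pi_pos, hu.2]⟩

theorem cos_pi_mul_div_two_nonpos {u : ℝ} (hu : u ∈ Icc 1 3) : cos (π * u / 2) ≤ 0 :=
  cos_nonpos_of_pi_div_two_le_of_le (by nlinarith [pi_pos, hu.1]) (by nlinarith [pi_pos, hu.2])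

theorem one_sub_pi_sq_div_forty_le_FresnelC_one : 1 - π ^ 2 / 40 ≤ FresnelC 1 := by
  have hpoly : ∫ t in (0 : ℝ)..1, (1 - π ^ 2 / 8 * t ^ 4) = 1 - π ^ 2 / 40 := by
    rw [integral_sub intervalIntegrable_const (Continuous.intervalIntegrable (by fun_prop) _ _),
      intervalIntegral.integral_const_mul, integral_pow]
    norm_num
    ring
  rw [← hpoly, FresnelC]
  refine integral_mono_on zero_le_one (Continuous.intervalIntegrable (by fun_prop) _ _)
    (Continuous.intervalIntegrable (by fun_prop) _ _) fun t _ => ?_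
  calc 1 - π ^ 2 / 8 * t ^ 4 = 1 - (π * t ^ 2 / 2) ^ 2 / 2 := by ring
    _ ≤ cos (π * t ^ 2 / 2) := one_sub_sq_div_two_le_cos

theorem hasDerivAt_sin_pi_mul_sq_div_two_div_pi (t : ℝ) :
    HasDerivAt (fun t => sin (π * t ^ 2 / 2) / π) (t * cos (π * t ^ 2 / 2)) t := by
  have := (((hasDerivAt_pow 2 t).const_mul π).div_const 2).sin.div_const π
  refine this.congr_deriv ?_
  field_simp
  ring

theorem neg_two_div_pi_le_integral_cos_pi_mul_sq_div_two :
    -2 / π ≤ ∫ t in (1 : ℝ)..√3, cos (π * t ^ 2 / 2) := by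
  have h1 : (1 : ℝ) ≤ √3 := (le_sqrt' one_pos).2 (by norm_num)
  have hexact : ∫ t in (1 : ℝ)..√3, t * cos (π * t ^ 2 / 2) = -2 / π := by
    rw [integral_eq_sub_of_hasDerivAt (fun t _ => hasDerivAt_sin_pi_mul_sq_div_two_div_pi t)
      (Continuous.intervalIntegrable (by fun_prop) _ _), sq_sqrt (by norm_num), one_pow, mul_one,
      show π * 3 / 2 = π + π / 2 by ring]
    simp only [sin_add, sin_pi, cos_pi, sin_pi_div_two, cos_pi_div_two]
    ring
  rw [← hexact]
  refine integral_mono_on h1 (Continuous.intervalIntegrable (by fun_prop) _ _)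
    (Continuous.intervalIntegrable (by fun_prop) _ _) fun t ht => ?_
  have hcos := cos_pi_mul_div_two_nonpos (u := t ^ 2)
    ⟨by nlinarith [ht.1], (le_sqrt' (by linarith [ht.1])).1 ht.2⟩
  nlinarith [ht.1]

theorem FresnelC_sqrt_three_pos : 0 < FresnelC √3 := by
  have hsplit : FresnelC √3 = FresnelC 1 + ∫ t in (1 : ℝ)..√3, cos (π * t ^ 2 / 2) :=
    (integral_add_adjacent_intervals (Continuous.intervalIntegrable (by fun_prop) _ _)
      (Continuous.intervalIntegrable (by fun_prop) _ _)).symm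
  have hnum : 2 / π < 1 - π ^ 2 / 40 := by
    rw [div_lt_iff₀ pi_pos]
    nlinarith [pi_gt_three, pi_lt_d2]
  linarith [one_sub_pi_sq_div_forty_le_FresnelC_one,
    neg_two_div_pi_le_integral_cos_pi_mul_sq_div_two, neg_div π 2]

theorem mul_cos_pi_mul_div_two_le_of_antitone {φ : ℝ → ℝ} (hφ : Antitone φ) {u : ℝ}
    (hu : u ∈ Icc 0 3) : φ 1 * cos (π * u / 2) ≤ φ u * cos (π * u / 2) := by
  rcases le_total u 1 with h | h
  · exact mul_le_mul_of_nonneg_right (hφ h) (cos_pi_mul_div_two_nonneg ⟨by linarith [hu.1], h⟩)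
  · exact mul_le_mul_of_nonpos_right (hφ h) (cos_pi_mul_div_two_nonpos ⟨h, hu.2⟩)

theorem mul_FresnelC_sqrt_three_lt_integral {φ : ℝ → ℝ} (hφ : StrictAnti φ)
    (hφc : Continuous φ) :
    φ 1 * FresnelC √3 < ∫ t in (0 : ℝ)..√3, φ (t ^ 2) * cos (π * t ^ 2 / 2) := by
  rw [FresnelC, ← intervalIntegral.integral_const_mul]
  refine integral_lt_integral_of_continuousOn_of_le_of_exists_lt (by positivity)
    (by fun_prop) (by fun_prop) (fun t ht => ?_) ⟨0, ⟨le_rfl, by positivity⟩, ?_⟩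
  · exact mul_cos_pi_mul_div_two_le_of_antitone hφ.antitone
      ⟨sq_nonneg t, (le_sqrt ht.1.le (by norm_num)).1 ht.2⟩
  · simpa using hφ zero_lt_one

theorem integral_div_sqrt_eq_integral_sq (g : ℝ → ℝ) {b c : ℝ} (hb : 0 ≤ b) (hc : 0 < c) :
    ∫ ξ in (0 : ℝ)..b ^ 2 / c, g ξ / √ξ = 2 / √c * ∫ t in (0 : ℝ)..b, g (t ^ 2 / c) := by
  have hsub := integral_Icc_deriv_smul_of_deriv_nonneg (f := fun t => t ^ 2 / c)
    (f' := fun t => 2 * t / c) (g := fun ξ => g ξ / √ξ) (by fun_prop)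
    (fun t _ => by simpa using ((hasDerivAt_pow 2 t).div_const c))
    (fun t ht => by have := ht.1; positivity) hb
  simp only [smul_eq_mul, ne_eq, OfNat.ofNat_ne_zero, not_false_eq_true, zero_pow, zero_div,
    integral_Icc_eq_integral_Ioc] at hsub
  rw [integral_of_le (by positivity), integral_of_le hb, ← MeasureTheory.integral_const_mul,
    ← hsub]
  refine setIntegral_congr_fun measurableSet_Ioc fun t ht => ?_
  have ht0 : t ≠ 0 := ht.1.ne'
  rw [sqrt_div' _ hc.le, sqrt_sq ht.1.le]
  field_simp
  rw [sq_sqrt hc.le]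
  ring

theorem integral_exp_mul_cos_div_sqrt_eq {x : ℝ} (hx : 0 < x) :
    ∫ ξ in (0 : ℝ)..(3 / (4 * x)), exp (-ξ) * cos (2 * π * x * ξ) / √ξ =
      (∫ t in (0 : ℝ)..√3, exp (-(t ^ 2 / (4 * x))) * cos (π * t ^ 2 / 2)) / √x := by
  have h := integral_div_sqrt_eq_integral_sq (fun ξ => exp (-ξ) * cos (2 * π * x * ξ))
    (sqrt_nonneg 3) (by positivity : 0 < 4 * x)
  have h4 : √(4 * x) = 2 * √x := by
    rw [sqrt_mul' _ hx.le, show (4 : ℝ) = 2 ^ 2 by norm_num, sqrt_sq zero_le_two]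
  have harg : ∀ t, 2 * π * x * (t ^ 2 / (4 * x)) = π * t ^ 2 / 2 := fun t => by
    field_simp
    ring
  rw [sq_sqrt (by norm_num)] at h
  simp only [h, h4, harg]
  rw [div_mul_cancel_left₀ two_ne_zero, inv_mul_eq_div]

/-- Positivity of ∫₀^{3/(4x)} e^{−ξ} cos(2πxξ)/√ξ dξ and verification of (H2) for
û₀(ξ) = e^{−|ξ|}/√|ξ|. -/
theorem example_H2 (x : ℝ) (hx : 0 < x) :
    (∫ ξ in (0 : ℝ)..(3 / (4 * x)), Real.exp (-ξ) * Real.cos (2 * π * x * ξ) / Real.sqrt ξ)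
        > Real.exp (-(1 / (4 * x))) * FresnelC (Real.sqrt 3) / Real.sqrt x ∧
    Real.exp (-(1 / (4 * x))) * FresnelC (Real.sqrt 3) / Real.sqrt x > 0 ∧
    0 < ∫ ξ in (0 : ℝ)..(3 / (4 * x)),
        (Real.exp (-|ξ|) / Real.sqrt |ξ|) * Real.cos (2 * π * x * ξ) := by
  have hweight : StrictAnti fun u => exp (-(u / (4 * x))) := fun a b hab =>
    exp_lt_exp.2 (neg_lt_neg (div_lt_div_of_pos_right hab (by positivity)))
  have hlower : exp (-(1 / (4 * x))) * FresnelC √3 / √x <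
      ∫ ξ in (0 : ℝ)..(3 / (4 * x)), exp (-ξ) * cos (2 * π * x * ξ) / √ξ := by
    rw [integral_exp_mul_cos_div_sqrt_eq hx]
    exact div_lt_div_of_pos_right (mul_FresnelC_sqrt_three_lt_integral hweight (by fun_prop))
      (sqrt_pos.2 hx)
  have hpos : 0 < exp (-(1 / (4 * x))) * FresnelC √3 / √x := by
    have := FresnelC_sqrt_three_pos
    positivity
  refine ⟨hlower, hpos, ?_⟩
  rw [integral_congr fun ξ hξ => ?_]
  · exact hpos.trans hlower
  · rw [uIcc_of_le (by positivity)] at hξ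
    simp only [abs_of_nonneg hξ.1]
    ring
end

section
/- The function û₀(ξ) = e^{−|ξ|}/√|ξ| is integrable on ℝ, and its inverse Fourier transform is u₀(x) = ∫_ℝ (e^{−|ξ|}/√|ξ|) e^{2πixξ} dξ = √(2π) · √((√(1+4π²x²) + 1)/(1+4π²x²)), which is a positive, bounded, continuous function of x. -/
/-!
Split the integral at `0`: the two halves are `∫_0^∞ ξ^{-1/2} e^{-bξ} dξ` for `b = 1 ∓ 2πix`.
The substitution `ξ = y²` turns each into a complex Gaussian integral, worth `(π / b)^{1/2}`
(this is `Γ(1/2) b^{-1/2}`). The two values are complex conjugates, so their sum is twice the real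
part of the principal square root of `w = π / (1 - 2πix)`, that is `√(2(|w| + Re w))`, which
simplifies to the closed form.
-/

open MeasureTheory Real Complex Set

theorem integrable_comp_abs_of_integrableOn_Ioi {E : Type*} [NormedAddCommGroup E]
    {f : ℝ → E} (hf : IntegrableOn f (Ioi 0)) : Integrable (fun x => f |x|) := by
  have hpos : IntegrableOn (fun x => f |x|) (Ioi 0) :=
    hf.congr_fun (fun x hx => by rw [abs_of_pos hx]) measurableSet_Ioi
  have hneg : IntegrableOn (fun x => f |x|) (Iic 0) := by
    have hneg_emb : MeasurableEmbedding fun x : ℝ => -x := (Homeomorph.neg ℝ).measurableEmbedding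
    rw [← Measure.map_neg_eq_self (volume : Measure ℝ), hneg_emb.integrableOn_map_iff]
    simp_rw [Function.comp_def, abs_neg, neg_preimage, neg_Iic, neg_zero]
    exact (integrableOn_Ici_iff_integrableOn_Ioi).2 hpos
  simpa only [Iic_union_Ioi, integrableOn_univ] using hneg.union hpos

theorem integral_eq_integral_Ioi_add_integral_Ioi_comp_neg {E : Type*} [NormedAddCommGroup E]
    [NormedSpace ℝ E] {f : ℝ → E} (hf : Integrable f) :
    ∫ x, f x = (∫ x in Ioi 0, f x) + ∫ x in Ioi 0, f (-x) := by
  rw [← intervalIntegral.integral_Iic_add_Ioi (b := 0) hf.integrableOn hf.integrableOn,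
    integral_comp_neg_Ioi, neg_zero, add_comm]

theorem integral_Ioi_inv_sqrt_smul {E : Type*} [NormedAddCommGroup E] [NormedSpace ℝ E]
    (g : ℝ → E) : ∫ y in Ioi 0, (√y)⁻¹ • g y = (2 : ℝ) • ∫ x in Ioi 0, g (x ^ 2) := by
  rw [← integral_comp_rpow_Ioi _ two_ne_zero, ← integral_smul]
  refine setIntegral_congr_fun measurableSet_Ioi fun x (hx : 0 < x) => ?_
  have hsq : x ^ (2 : ℝ) = x ^ 2 := Real.rpow_natCast x 2
  rw [hsq, Real.sqrt_sq hx.le, smul_smul, abs_two, show (2 : ℝ) - 1 = 1 by norm_num,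
    Real.rpow_one, mul_assoc, mul_inv_cancel₀ hx.ne', mul_one]

theorem integral_Ioi_inv_sqrt_mul_cexp {b : ℂ} (hb : 0 < b.re) :
    ∫ y in Ioi (0 : ℝ), ((√y)⁻¹ : ℂ) * cexp (-b * y) = (π / b) ^ (1 / 2 : ℂ) := by
  have hsubst := integral_Ioi_inv_sqrt_smul fun y : ℝ => cexp (-b * y)
  simp only [real_smul, ofReal_inv, ofReal_pow] at hsubst
  rw [hsubst, integral_gaussian_complex_Ioi hb]
  push_cast
  ring

theorem cpow_half_add_conj_cpow_half {w : ℂ} (hw : w.arg ≠ π) :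
    w ^ (1 / 2 : ℂ) + (starRingEnd ℂ w) ^ (1 / 2 : ℂ) = (√(2 * (‖w‖ + w.re)) : ℝ) := by
  have hhalf : starRingEnd ℂ (1 / 2 : ℂ) = 1 / 2 := by simp [map_ofNat]
  rw [conj_cpow _ _ hw, hhalf, add_conj, one_div, cpow_inv_two_re]
  norm_cast
  rw [show 2 * (‖w‖ + w.re) = 2 ^ 2 * ((‖w‖ + w.re) / 2) by ring, Real.sqrt_mul (by positivity),
    Real.sqrt_sq zero_le_two]

theorem integrableOn_Ioi_exp_neg_div_sqrt :
    IntegrableOn (fun ξ : ℝ => rexp (-ξ) / √ξ) (Ioi 0) := by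
  refine (GammaIntegral_convergent one_half_pos).congr_fun (fun ξ (hξ : 0 < ξ) => ?_)
    measurableSet_Ioi
  dsimp only
  rw [Real.sqrt_eq_rpow, show (1 / 2 - 1 : ℝ) = -(1 / 2) by norm_num, Real.rpow_neg hξ.le,
    ← div_eq_mul_inv]

theorem integrable_exp_neg_abs_div_sqrt_abs :
    Integrable fun ξ : ℝ => rexp (-|ξ|) / √|ξ| :=
  integrable_comp_abs_of_integrableOn_Ioi integrableOn_Ioi_exp_neg_div_sqrt

theorem exp_neg_abs_div_sqrt_abs_mul_cexp_of_pos (c : ℝ) {ξ : ℝ} (hξ : 0 < ξ) :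
    (rexp (-|ξ|) : ℂ) / (√|ξ| : ℂ) * cexp (c * ξ * I) = ((√ξ)⁻¹ : ℂ) * cexp (-(1 - c * I) * ξ) := by
  rw [abs_of_pos hξ, ofReal_exp, div_eq_inv_mul, mul_assoc, ← Complex.exp_add]
  push_cast
  ring_nf

theorem integral_exp_neg_abs_div_sqrt_abs_mul_cexp (c : ℝ) :
    ∫ ξ : ℝ, (rexp (-|ξ|) : ℂ) / (√|ξ| : ℂ) * cexp (c * ξ * I)
      = (π / (1 - c * I)) ^ (1 / 2 : ℂ) + (π / (1 + c * I)) ^ (1 / 2 : ℂ) := by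
  have hint : Integrable fun ξ : ℝ => (rexp (-|ξ|) : ℂ) / (√|ξ| : ℂ) * cexp (c * ξ * I) := by
    have h := integrable_exp_neg_abs_div_sqrt_abs.ofReal (𝕜 := ℂ)
    push_cast at h
    refine h.mul_bdd (c := 1) (by fun_prop) (.of_forall fun ξ => ?_)
    rw [← ofReal_mul]
    exact (norm_exp_ofReal_mul_I _).le
  have hsub (t : ℝ) : ∫ ξ in Ioi 0, (rexp (-|ξ|) : ℂ) / (√|ξ| : ℂ) * cexp (t * ξ * I)
      = (π / (1 - t * I)) ^ (1 / 2 : ℂ) := by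
    rw [← integral_Ioi_inv_sqrt_mul_cexp (by simp)]
    exact setIntegral_congr_fun measurableSet_Ioi fun ξ hξ =>
      exp_neg_abs_div_sqrt_abs_mul_cexp_of_pos t hξ
  have hneg := hsub (-c)
  simp only [ofReal_neg, neg_mul, sub_neg_eq_add] at hneg
  rw [integral_eq_integral_Ioi_add_integral_Ioi_comp_neg hint, hsub, ← hneg]
  simp only [ofReal_neg, abs_neg, mul_neg, neg_mul]

theorem cpow_half_pi_div_one_sub_add (c : ℝ) :
    (π / (1 - c * I)) ^ (1 / 2 : ℂ) + (π / (1 + c * I)) ^ (1 / 2 : ℂ)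
      = (√(2 * π) * √((√(1 + c ^ 2) + 1) / (1 + c ^ 2)) : ℝ) := by
  set w : ℂ := π / (1 - c * I)
  have hs : 0 < 1 + c ^ 2 := by positivity
  have hnormSq : normSq (1 - c * I) = 1 + c ^ 2 := by simp [normSq_apply]; ring
  have hre : w.re = π / (1 + c ^ 2) := by simp [w, div_re, hnormSq]
  have hnorm : ‖w‖ = π / √(1 + c ^ 2) := by
    rw [norm_div, norm_real, Real.norm_of_nonneg pi_pos.le, norm_def, hnormSq]
  have harg : w.arg ≠ π := fun h => by
    have := (arg_eq_pi_iff.mp h).1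
    rw [hre] at this
    linarith [div_pos pi_pos hs]
  have hconj : π / (1 + c * I) = starRingEnd ℂ w := by
    simp [w, map_div₀]
  rw [hconj, cpow_half_add_conj_cpow_half harg, hre, hnorm, ← Real.sqrt_mul (by positivity)]
  congr 2
  field_simp
  rw [mul_add, Real.mul_self_sqrt hs.le, mul_one]

theorem sqrt_add_one_div_le_two {s : ℝ} (hs : 1 ≤ s) : (√s + 1) / s ≤ 2 := by
  have : √s ≤ s := Real.sqrt_le_left (by linarith) |>.mpr (by nlinarith)
  rw [div_le_iff₀ (by linarith)]
  linarith

/-- û₀(ξ) = e^{−|ξ|}/√|ξ| is integrable and its inverse Fourier transform is the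
explicit positive, bounded, continuous function
u₀(x) = √(2π)·√((√(1+4π²x²)+1)/(1+4π²x²)). -/
theorem example_inverse_fourier :
    Integrable (fun ξ : ℝ => Real.exp (-|ξ|) / Real.sqrt |ξ|) ∧
    (∀ x : ℝ,
      (∫ ξ : ℝ, ((Real.exp (-|ξ|) / Real.sqrt |ξ|) : ℂ)
          * Complex.exp ((2 * π * x * ξ) * Complex.I))
        = ((Real.sqrt (2 * π) *
            Real.sqrt ((Real.sqrt (1 + 4 * π ^ 2 * x ^ 2) + 1) / (1 + 4 * π ^ 2 * x ^ 2))) : ℂ)) ∧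
    Continuous (fun x : ℝ => Real.sqrt (2 * π) *
        Real.sqrt ((Real.sqrt (1 + 4 * π ^ 2 * x ^ 2) + 1) / (1 + 4 * π ^ 2 * x ^ 2))) ∧
    (∀ x : ℝ, 0 < Real.sqrt (2 * π) *
        Real.sqrt ((Real.sqrt (1 + 4 * π ^ 2 * x ^ 2) + 1) / (1 + 4 * π ^ 2 * x ^ 2))) ∧
    (∃ M : ℝ, ∀ x : ℝ, Real.sqrt (2 * π) *
        Real.sqrt ((Real.sqrt (1 + 4 * π ^ 2 * x ^ 2) + 1) / (1 + 4 * π ^ 2 * x ^ 2)) ≤ M) := by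
  have hsq (x : ℝ) : 4 * π ^ 2 * x ^ 2 = (2 * π * x) ^ 2 := by ring
  refine ⟨integrable_exp_neg_abs_div_sqrt_abs, fun x => ?_,
    by fun_prop (disch := intro; positivity), fun x => by positivity,
    ⟨√(2 * π) * √2, fun x => ?_⟩⟩
  · have h := integral_exp_neg_abs_div_sqrt_abs_mul_cexp (2 * π * x)
    rw [cpow_half_pi_div_one_sub_add, ← hsq] at h
    simpa only [ofReal_mul, ofReal_ofNat] using h
  · gcongr
    exact sqrt_add_one_div_le_two (le_add_of_nonneg_right (by positivity))
end

section
/- Let f ∈ L¹(ℝ) be positive, even, and radially decreasing. Then g(ξ) = f(ξ)/√|ξ| is in L¹(ℝ), is even, radially decreasing on (0,∞), and satisfies ∫_0^{3/(4x)} g(ξ) cos(2πxξ) dξ > 0 for every x > 0. -/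
/-!
Integrability: near `0` the weight `|ξ| ^ (-1/2)` is integrable and `f` is bounded by `f 0`;
away from `0` the quotient is dominated by `f` itself.

Positivity: the substitution `ξ = t / (4x)` reduces the claim to
`∫₀³ h t / √t * cos (π t / 2) > 0` for the positive decreasing `h t = f (t / (4x))`.
On `[0, 1]` the cosine is at least `1 - π² t² / 8` and `h ≥ h 1`, which gives at least
`(2 - π² / 20) h 1`. On `[1, 3]` the cosine is nonpositive and `h t / √t ≤ h 1`, which gives at
least `h 1 ∫₁³ cos (π t / 2) = -(4 / π) h 1`. The sum is positive because `4 / π + π² / 20 < 2`.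
-/

open MeasureTheory Real intervalIntegral Set

theorem integrableOn_div_sqrt_abs {f : ℝ → ℝ} {s : Set ℝ} {C : ℝ} (hs : MeasurableSet s)
    (hf : IntegrableOn f s) (hbound : ∀ ξ ∈ s, |ξ| < 1 → |f ξ| ≤ C) :
    IntegrableOn (fun ξ => f ξ / √|ξ|) s := by
  have hmeas : AEStronglyMeasurable (fun ξ => f ξ / √|ξ|) (volume.restrict s) :=
    (hf.aemeasurable.div (by fun_prop)).aestronglyMeasurable
  have hball : IntegrableOn (fun ξ : ℝ => C * |ξ| ^ (-(1 / 2) : ℝ)) (Metric.ball 0 1) := by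
    refine (integrableOn_ball_of_norm_le_rpow (f := fun ξ : ℝ => |ξ| ^ (-(1 / 2) : ℝ))
      (C := 1) (α := 1 / 2) (by simp) (by simp; norm_num) (Filter.Eventually.of_forall fun ξ => ?_)
      (continuous_abs.measurable.pow_const _).aestronglyMeasurable).const_mul C
    simp [abs_of_nonneg (rpow_nonneg (abs_nonneg ξ) _)]
  have hnear : IntegrableOn (fun ξ => f ξ / √|ξ|) (s ∩ Metric.ball 0 1) := by
    refine Integrable.mono' (hball.mono_set inter_subset_right)
      (hmeas.mono_set inter_subset_left) ?_
    filter_upwards [ae_restrict_mem (hs.inter Metric.isOpen_ball.measurableSet)] with ξ hξ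
    rw [norm_div, norm_eq_abs, norm_eq_abs, abs_of_nonneg (sqrt_nonneg _), sqrt_eq_rpow,
      rpow_neg (abs_nonneg ξ), div_eq_mul_inv]
    gcongr
    exact hbound ξ hξ.1 (by simpa using hξ.2)
  have hfar : IntegrableOn (fun ξ => f ξ / √|ξ|) (s \ Metric.ball 0 1) := by
    refine Integrable.mono' (hf.mono_set sdiff_subset).norm (hmeas.mono_set sdiff_subset) ?_
    filter_upwards [ae_restrict_mem (hs.diff Metric.isOpen_ball.measurableSet)] with ξ hξ
    have h1 : 1 ≤ √|ξ| := one_le_sqrt.mpr (by simpa using hξ.2)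
    rw [norm_div]
    exact div_le_self (norm_nonneg _) (h1.trans (le_abs_self _))
  simpa using hnear.union hfar

theorem integral_div_sqrt_abs_comp_mul_left (F : ℝ → ℝ) {c : ℝ} (hc : 0 < c) (b : ℝ) :
    ∫ ξ in 0..c * b, F ξ / √|ξ| = √c * ∫ t in 0..b, F (c * t) / √|t| := by
  have hscale : ∀ t, F (c * t) / √|t| = √c * (F (c * t) / √|c * t|) := by
    intro t
    rw [abs_mul, abs_of_pos hc, sqrt_mul hc.le]
    field_simp
  simp_rw [hscale, intervalIntegral.integral_const_mul, integral_comp_mul_left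
    (fun ξ => F ξ / √|ξ|) hc.ne', mul_zero, smul_eq_mul, ← mul_assoc, mul_self_sqrt hc.le,
    mul_inv_cancel₀ hc.ne', one_mul]

theorem four_div_pi_add_pi_sq_div_twenty_lt_two : 4 / π + π ^ 2 / 20 < 2 := by
  have h4 : 4 / π < 1.28 := by
    rw [div_lt_iff₀ pi_pos]
    linarith [pi_gt_d6]
  nlinarith [pi_lt_d2, pi_pos]

theorem two_sub_pi_sq_div_twenty_mul_le_integral {h : ℝ → ℝ} (hanti : AntitoneOn h (Icc 0 1))
    (hpos : 0 ≤ h 1)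
    (hint : IntervalIntegrable (fun t => h t / √|t| * cos (π / 2 * t)) volume 0 1) :
    (2 - π ^ 2 / 20) * h 1 ≤ ∫ t in 0..1, h t / √|t| * cos (π / 2 * t) := by
  have hr1 : IntervalIntegrable (fun t : ℝ => t ^ (-(1 / 2) : ℝ)) volume 0 1 :=
    intervalIntegrable_rpow' (by norm_num)
  have hr3 : IntervalIntegrable (fun t : ℝ => t ^ (3 / 2 : ℝ)) volume 0 1 :=
    intervalIntegrable_rpow' (by norm_num)
  have hval : ∫ t in (0 : ℝ)..1, h 1 * (t ^ (-(1 / 2) : ℝ) - π ^ 2 / 8 * t ^ (3 / 2 : ℝ)) =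
      (2 - π ^ 2 / 20) * h 1 := by
    rw [intervalIntegral.integral_const_mul, integral_sub hr1 (hr3.const_mul _),
      intervalIntegral.integral_const_mul,
      integral_rpow (Or.inl (by norm_num)), integral_rpow (Or.inl (by norm_num))]
    norm_num
    ring
  rw [← hval]
  refine integral_mono_on_of_le_Ioo zero_le_one ((hr1.sub (hr3.const_mul _)).const_mul _) hint
    fun t ht => ?_
  have ht0 : 0 < t := ht.1
  have hcos_ge : 1 - π ^ 2 / 8 * t ^ 2 ≤ cos (π / 2 * t) :=
    calc 1 - π ^ 2 / 8 * t ^ 2 = 1 - (π / 2 * t) ^ 2 / 2 := by ring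
      _ ≤ cos (π / 2 * t) := one_sub_sq_div_two_le_cos
  have hcos_nonneg : 0 ≤ cos (π / 2 * t) := by
    apply cos_nonneg_of_mem_Icc
    constructor <;> nlinarith [pi_pos, ht.2]
  have hht : h 1 ≤ h t := hanti ⟨ht0.le, ht.2.le⟩ ⟨zero_le_one, le_rfl⟩ ht.2.le
  have h32 : t ^ (3 / 2 : ℝ) = t ^ 2 * t ^ (-(1 / 2) : ℝ) := by
    rw [← rpow_natCast, ← rpow_add ht0]
    norm_num
  rw [h32, abs_of_pos ht0, sqrt_eq_rpow, rpow_neg ht0.le]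
  calc h 1 * ((t ^ (1 / 2 : ℝ))⁻¹ - π ^ 2 / 8 * (t ^ 2 * (t ^ (1 / 2 : ℝ))⁻¹))
      = h 1 * (1 - π ^ 2 / 8 * t ^ 2) * (t ^ (1 / 2 : ℝ))⁻¹ := by ring
    _ ≤ h t * cos (π / 2 * t) * (t ^ (1 / 2 : ℝ))⁻¹ := by
      refine mul_le_mul_of_nonneg_right ?_ (by positivity)
      calc h 1 * (1 - π ^ 2 / 8 * t ^ 2) ≤ h 1 * cos (π / 2 * t) := by gcongr
        _ ≤ h t * cos (π / 2 * t) := by gcongr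
    _ = h t / t ^ (1 / 2 : ℝ) * cos (π / 2 * t) := by ring

theorem neg_four_div_pi_mul_le_integral {h : ℝ → ℝ} (hanti : AntitoneOn h (Icc 1 3))
    (hpos : 0 ≤ h 1)
    (hint : IntervalIntegrable (fun t => h t / √|t| * cos (π / 2 * t)) volume 1 3) :
    -(4 / π) * h 1 ≤ ∫ t in 1..3, h t / √|t| * cos (π / 2 * t) := by
  have hval : ∫ t in (1 : ℝ)..3, h 1 * cos (π / 2 * t) = -(4 / π) * h 1 := by
    rw [intervalIntegral.integral_const_mul,
      integral_comp_mul_left (fun t => cos t) (by positivity), integral_cos,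
      show π / 2 * 3 = π / 2 + π by ring, sin_add_pi, mul_one, sin_pi_div_two, smul_eq_mul]
    field_simp
    ring
  rw [← hval]
  refine integral_mono_on (by norm_num) ((by fun_prop : Continuous _).intervalIntegrable _ _) hint
    fun t ht => ?_
  have hcos : cos (π / 2 * t) ≤ 0 :=
    cos_nonpos_of_pi_div_two_le_of_le (by nlinarith [pi_pos, ht.1]) (by nlinarith [pi_pos, ht.2])
  have hweight : h t / √|t| ≤ h 1 := by
    have hht : h t ≤ h 1 := hanti ⟨le_rfl, by norm_num⟩ ht ht.1
    have hsqrt : 1 ≤ √|t| := one_le_sqrt.mpr (ht.1.trans (le_abs_self t))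
    rcases le_total 0 (h t) with hnonneg | hneg
    · exact (div_le_self hnonneg hsqrt).trans hht
    · exact (div_nonpos_of_nonpos_of_nonneg hneg (sqrt_nonneg _)).trans hpos
  exact mul_le_mul_of_nonpos_right hweight hcos

theorem integral_div_sqrt_abs_mul_cos_pi_div_two_pos {h : ℝ → ℝ}
    (hanti : AntitoneOn h (Icc 0 3)) (hpos : 0 < h 1) :
    0 < ∫ t in 0..3, h t / √|t| * cos (π / 2 * t) := by
  have hbound : ∀ t ∈ Icc (0 : ℝ) 3, |t| < 1 → |h t| ≤ h 0 := by
    intro t ht ht1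
    have ht1' : t ≤ 1 := (le_abs_self t).trans ht1.le
    have hh1t : h 1 ≤ h t := hanti ht ⟨zero_le_one, by norm_num⟩ ht1'
    rw [abs_of_pos (hpos.trans_le hh1t)]
    exact hanti ⟨le_rfl, by norm_num⟩ ht ht.1
  have hint : IntegrableOn (fun t => h t / √|t| * cos (π / 2 * t)) (Icc 0 3) :=
    (integrableOn_div_sqrt_abs measurableSet_Icc (hanti.integrableOn_isCompact isCompact_Icc)
      hbound).mul_continuousOn (by fun_prop) isCompact_Icc
  have hint01 : IntervalIntegrable (fun t => h t / √|t| * cos (π / 2 * t)) volume 0 1 :=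
    (intervalIntegrable_iff_integrableOn_Icc_of_le zero_le_one).2
      (hint.mono_set (Icc_subset_Icc le_rfl (by norm_num)))
  have hint13 : IntervalIntegrable (fun t => h t / √|t| * cos (π / 2 * t)) volume 1 3 :=
    (intervalIntegrable_iff_integrableOn_Icc_of_le (by norm_num)).2
      (hint.mono_set (Icc_subset_Icc zero_le_one le_rfl))
  have hnear := two_sub_pi_sq_div_twenty_mul_le_integral
    (hanti.mono (Icc_subset_Icc le_rfl (by norm_num))) hpos.le hint01
  have hfar := neg_four_div_pi_mul_le_integral
    (hanti.mono (Icc_subset_Icc zero_le_one le_rfl)) hpos.le hint13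
  have hgap : 0 < (2 - π ^ 2 / 20 - 4 / π) * h 1 :=
    mul_pos (by linarith [four_div_pi_add_pi_sq_div_twenty_lt_two]) hpos
  rw [← integral_add_adjacent_intervals hint01 hint13]
  linarith

theorem integral_div_sqrt_abs_mul_cos_pos {f : ℝ → ℝ} (hanti : AntitoneOn f (Ici 0))
    (hpos : ∀ ξ, 0 < ξ → 0 < f ξ) {x : ℝ} (hx : 0 < x) :
    0 < ∫ ξ in 0..3 / (4 * x), f ξ / √|ξ| * cos (2 * π * x * ξ) := by
  set c := (4 * x)⁻¹ with hc_def
  have hc : 0 < c := by positivity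
  have hrescale : ∀ t, f (c * t) * cos (2 * π * x * (c * t)) / √|t| =
      f (c * t) / √|t| * cos (π / 2 * t) := by
    intro t
    rw [div_mul_eq_mul_div, hc_def]
    congr 3
    field_simp
    ring
  simp_rw [div_mul_eq_mul_div (f _), show 3 / (4 * x) = c * 3 by ring,
    integral_div_sqrt_abs_comp_mul_left _ hc, hrescale]
  refine mul_pos (sqrt_pos.2 hc) (integral_div_sqrt_abs_mul_cos_pi_div_two_pos ?_ ?_)
  · exact fun a ha b hb hab => hanti (mul_nonneg hc.le ha.1) (mul_nonneg hc.le hb.1)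
      (mul_le_mul_of_nonneg_left hab hc.le)
  · simpa using hpos c hc

/-- For any positive, even, radially decreasing f ∈ L¹, the function g(ξ) = f(ξ)/√|ξ|
is integrable, even, radially decreasing on (0,∞) and satisfies the positivity
condition (H2) at every x > 0. -/
theorem general_H2 (f : ℝ → ℝ) (hf : Integrable f) (hf0 : ∀ ξ, 0 < f ξ)
    (hfeven : ∀ ξ, f (-ξ) = f ξ)
    (hfdec : ∀ ξ₁ ξ₂ : ℝ, |ξ₁| ≤ |ξ₂| → f ξ₂ ≤ f ξ₁) :
    Integrable (fun ξ : ℝ => f ξ / Real.sqrt |ξ|) ∧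
    (∀ ξ : ℝ, f (-ξ) / Real.sqrt |(-ξ)| = f ξ / Real.sqrt |ξ|) ∧
    (∀ ξ₁ ξ₂ : ℝ, 0 < ξ₁ → ξ₁ ≤ ξ₂ → f ξ₂ / Real.sqrt |ξ₂| ≤ f ξ₁ / Real.sqrt |ξ₁|) ∧
    (∀ x : ℝ, 0 < x →
      0 < ∫ ξ in (0 : ℝ)..(3 / (4 * x)), (f ξ / Real.sqrt |ξ|) * Real.cos (2 * π * x * ξ)) := by
  have hanti : AntitoneOn f (Ici 0) := fun a ha b hb hab =>
    hfdec a b (by rwa [abs_of_nonneg ha, abs_of_nonneg hb])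
  refine ⟨?_, fun ξ => by rw [abs_neg, hfeven], fun ξ₁ ξ₂ h₁ h₁₂ => ?_,
    fun x hx => integral_div_sqrt_abs_mul_cos_pos hanti (fun ξ _ => hf0 ξ) hx⟩
  · refine integrableOn_univ.1 (integrableOn_div_sqrt_abs (C := f 0) MeasurableSet.univ
      hf.integrableOn fun ξ _ _ => ?_)
    rw [abs_of_pos (hf0 ξ)]
    exact hfdec 0 ξ (by simp)
  · have h₂ : 0 < ξ₂ := h₁.trans_le h₁₂
    rw [abs_of_pos h₁, abs_of_pos h₂]
    exact div_le_div₀ (hf0 ξ₁).le (hanti h₁.le h₂.le h₁₂) (sqrt_pos.2 h₁) (sqrt_le_sqrt h₁₂)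
end
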